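/- For a min-plus matrix A ∈ ℝ_min^{n×n} whose associated directed graph contains at least one circuit, the minimum over all circuits C of the average weight ω(C)/ℓ(C) is an eigenvalue of A in the min-plus sense. -/

import Mathlib

open Finset

/-- `w` is the average weight of some circuit (a closed path with pairwise
distinct intermediate vertices) in the network of the min-plus matrix `A`. -/
def IsCircuitAvg {n : ℕ} (A : Matrix (Fin n) (Fin n) (WithTop ℝ)) (w : ℝ) : Prop :=
  ∃ (s : ℕ) (f : ℕ → Fin n), 0 < s ∧ f s = f 0 ∧
    (∀ k l, k < s → l < s → f k = f l → k = l) ∧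
    ∑ k ∈ range s, A (f k) (f (k + 1)) = (((s : ℝ) * w : ℝ) : WithTop ℝ)

/-!
Subtracting `λ` from every entry of `A` gives a matrix `B` all of whose circuits, hence all of
whose closed walks, have nonnegative weight, and which has a circuit of weight `0` through some
vertex `j`. Cutting out closed subwalks then shows that every walk is dominated by one of length
at most `n`, so `B⁺ = B ⊕ B² ⊕ ⋯ ⊕ Bⁿ` lies below every power `Bᵐ` with `m ≥ 1`; since
`B⁺ⱼⱼ ≤ 0`, its column `j` also lies below column `j` of `B⁰`. Hence
`B ⊗ B⁺_{·j} = (B² ⊕ ⋯ ⊕ Bⁿ⁺¹)_{·j} = B⁺_{·j}`, an eigenvector of `A` for `λ`.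
-/

namespace MinPlus

section Walks

variable {ι α : Type*} [AddCommMonoid α]

def walkWeight (B : Matrix ι ι α) (f : ℕ → ι) (m : ℕ) : α :=
  ∑ k ∈ range m, B (f k) (f (k + 1))

lemma walkWeight_add (B : Matrix ι ι α) (f : ℕ → ι) (m r : ℕ) :
    walkWeight B f (m + r) = walkWeight B f m + walkWeight B (fun t => f (m + t)) r := by
  simp only [walkWeight, sum_range_add, add_assoc]

lemma walkWeight_succ' (B : Matrix ι ι α) (f : ℕ → ι) (m : ℕ) :
    walkWeight B f (m + 1) = B (f 0) (f 1) + walkWeight B (fun t => f (t + 1)) m := by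
  rw [walkWeight, sum_range_succ', add_comm]
  rfl

lemma walkWeight_congr (B : Matrix ι ι α) {f g : ℕ → ι} {m : ℕ} (h : ∀ t ≤ m, f t = g t) :
    walkWeight B f m = walkWeight B g m :=
  sum_congr rfl fun t ht => by
    have := mem_range.mp ht
    rw [h t (by omega), h (t + 1) (by omega)]

lemma walkWeight_add_const (B : Matrix ι ι α) (c : α) (f : ℕ → ι) (m : ℕ) :
    walkWeight (fun i j => B i j + c) f m = walkWeight B f m + m • c := by
  simp [walkWeight, sum_add_distrib]

/-- The walk `f` with its closed subwalk from time `k` to time `k + c` cut out. -/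
def removeLoop (f : ℕ → ι) (k c : ℕ) : ℕ → ι :=
  fun t => if t ≤ k then f t else f (t + c)

lemma removeLoop_zero (f : ℕ → ι) (k c : ℕ) : removeLoop f k c 0 = f 0 := by
  simp [removeLoop]

lemma removeLoop_add {f : ℕ → ι} {k c : ℕ} (h : f (k + c) = f k) (t : ℕ) :
    removeLoop f k c (k + t) = f (k + c + t) := by
  rcases Nat.eq_zero_or_pos t with rfl | ht
  · simp [removeLoop, h]
  · simp only [removeLoop, if_neg (show ¬k + t ≤ k by omega)]
    congr 1
    omega

lemma walkWeight_eq_removeLoop_add {f : ℕ → ι} {k c : ℕ} (B : Matrix ι ι α) (r : ℕ)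
    (h : f (k + c) = f k) :
    walkWeight B f (k + c + r) =
      walkWeight B (removeLoop f k c) (k + r) + walkWeight B (fun t => f (k + t)) c := by
  have hhead : walkWeight B (removeLoop f k c) k = walkWeight B f k :=
    walkWeight_congr B fun t ht => if_pos ht
  have htail : walkWeight B (fun t => removeLoop f k c (k + t)) r =
      walkWeight B (fun t => f (k + c + t)) r :=
    walkWeight_congr B fun t _ => removeLoop_add h t
  rw [walkWeight_add, walkWeight_add, walkWeight_add B (removeLoop f k c), hhead, htail,
    add_right_comm]

lemma exists_lt_lt_eq_of_not_injOn {f : ℕ → ι} {m : ℕ} (h : ¬ Set.InjOn f (Set.Iio m)) :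
    ∃ k l, k < l ∧ l < m ∧ f k = f l := by
  simp only [Set.InjOn, Set.mem_Iio, not_forall] at h
  obtain ⟨a, ha, b, hb, hab, hne⟩ := h
  rcases Nat.lt_or_gt_of_ne hne with h | h
  · exact ⟨a, b, h, hb, hab⟩
  · exact ⟨b, a, h, ha, hab.symm⟩

lemma not_injOn_Iio_of_card_lt [Fintype ι] {m : ℕ} (hm : Fintype.card ι < m) (f : ℕ → ι) :
    ¬ Set.InjOn f (Set.Iio m) := fun h => by
  have := card_le_card_of_injOn (s := range m) (t := univ) f (fun _ _ => mem_univ _)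
    (by rwa [coe_range])
  rw [card_range, card_univ] at this
  omega

variable [PartialOrder α] [IsOrderedAddMonoid α]

theorem walkWeight_nonneg_of_closed {B : Matrix ι ι α}
    (hcirc : ∀ m f, 0 < m → f m = f 0 → Set.InjOn f (Set.Iio m) → 0 ≤ walkWeight B f m)
    {m : ℕ} {f : ℕ → ι} (hm : 0 < m) (hf : f m = f 0) : 0 ≤ walkWeight B f m := by
  induction m using Nat.strong_induction_on generalizing f with
  | _ m ih =>
    by_cases hinj : Set.InjOn f (Set.Iio m)
    · exact hcirc m f hm hf hinj
    obtain ⟨k, l, hkl, hlm, hfkl⟩ := exists_lt_lt_eq_of_not_injOn hinj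
    obtain ⟨c, rfl⟩ : ∃ c, l = k + c := ⟨l - k, by omega⟩
    obtain ⟨r, rfl⟩ : ∃ r, m = k + c + r := ⟨m - (k + c), by omega⟩
    have hloop : f (k + c) = f k := hfkl.symm
    rw [walkWeight_eq_removeLoop_add B r hloop]
    refine add_nonneg (ih (k + r) (by omega) (by omega) ?_) (ih c (by omega) (by omega) ?_)
    · rw [removeLoop_add hloop, removeLoop_zero, hf]
    · simpa using hloop

theorem exists_short_walkWeight_le [Fintype ι] {B : Matrix ι ι α}
    (hB : ∀ m f, 0 < m → f m = f 0 → 0 ≤ walkWeight B f m)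
    {m : ℕ} {f : ℕ → ι} (hm : 0 < m) :
    ∃ m' g, 0 < m' ∧ m' ≤ Fintype.card ι ∧ g 0 = f 0 ∧ g m' = f m ∧
      walkWeight B g m' ≤ walkWeight B f m := by
  induction m using Nat.strong_induction_on generalizing f with
  | _ m ih =>
    by_cases hmn : m ≤ Fintype.card ι
    · exact ⟨m, f, hm, hmn, rfl, rfl, le_rfl⟩
    obtain ⟨k, l, hkl, hlm, hfkl⟩ :=
      exists_lt_lt_eq_of_not_injOn (not_injOn_Iio_of_card_lt (not_le.mp hmn) f)
    obtain ⟨c, rfl⟩ : ∃ c, l = k + c := ⟨l - k, by omega⟩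
    obtain ⟨r, rfl⟩ : ∃ r, m = k + c + r := ⟨m - (k + c), by omega⟩
    have hloop : f (k + c) = f k := hfkl.symm
    obtain ⟨m', g, hm', hm'n, hg0, hgm, hg⟩ := ih (k + r) (by omega) (f := removeLoop f k c)
      (by omega)
    refine ⟨m', g, hm', hm'n, by rw [hg0, removeLoop_zero], by rw [hgm, removeLoop_add hloop], ?_⟩
    calc walkWeight B g m' ≤ walkWeight B (removeLoop f k c) (k + r) := hg
      _ ≤ walkWeight B (removeLoop f k c) (k + r) + walkWeight B (fun t => f (k + t)) c :=
        le_add_of_nonneg_right (hB c _ (by omega) (by simpa using hloop))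
      _ = walkWeight B f (k + c + r) := (walkWeight_eq_removeLoop_add B r hloop).symm

end Walks

section Powers

variable {ι α : Type*} [LinearOrderedAddCommMonoidWithTop α]

lemma add_finset_inf (c : α) (s : Finset ι) (f : ι → α) :
    c + s.inf f = s.inf fun i => c + f i :=
  apply_inf_eq_inf_comp_of_linearOrder (c + ·) (fun _ _ h => add_le_add_right h _) (add_top c)

variable [Fintype ι] [DecidableEq ι]

/-- The min-plus power `B^m`. -/
def minWalkWeight (B : Matrix ι ι α) : ℕ → Matrix ι ι α
  | 0 => fun i j => if i = j then 0 else ⊤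
  | m + 1 => fun i j => univ.inf fun k => B i k + minWalkWeight B m k j

lemma minWalkWeight_le_walkWeight (B : Matrix ι ι α) (m : ℕ) (f : ℕ → ι) :
    minWalkWeight B m (f 0) (f m) ≤ walkWeight B f m := by
  induction m generalizing f with
  | zero => simp [minWalkWeight, walkWeight]
  | succ m ih =>
    rw [walkWeight_succ']
    calc minWalkWeight B (m + 1) (f 0) (f (m + 1))
        ≤ B (f 0) (f 1) + minWalkWeight B m (f 1) (f (m + 1)) := inf_le (mem_univ (f 1))
      _ ≤ B (f 0) (f 1) + walkWeight B (fun t => f (t + 1)) m :=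
          add_le_add_right (ih fun t => f (t + 1)) _

lemma exists_walkWeight_eq_minWalkWeight (B : Matrix ι ι α) (m : ℕ) {i j : ι}
    (h : minWalkWeight B m i j ≠ ⊤) :
    ∃ f : ℕ → ι, f 0 = i ∧ f m = j ∧ walkWeight B f m = minWalkWeight B m i j := by
  induction m generalizing i with
  | zero =>
    have hij : i = j := by by_contra hij; simp [minWalkWeight, hij] at h
    exact ⟨fun _ => i, rfl, hij, by simp [minWalkWeight, walkWeight, hij]⟩
  | succ m ih =>
    obtain ⟨k, -, hk⟩ := univ.exists_mem_eq_inf ⟨i, mem_univ i⟩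
      fun k => B i k + minWalkWeight B m k j
    have hk' : minWalkWeight B (m + 1) i j = B i k + minWalkWeight B m k j := hk
    obtain ⟨g, hg0, hgm, hg⟩ := ih (i := k) fun htop => h (by simp [hk', htop])
    refine ⟨fun t => match t with | 0 => i | t + 1 => g t, rfl, hgm, ?_⟩
    rw [walkWeight_succ', hk', ← hg, ← hg0]

/-- The min-plus matrix `B⁺ = B ⊕ B² ⊕ ⋯ ⊕ Bⁿ`, `n` the number of vertices. -/
def kleenePlus (B : Matrix ι ι α) : Matrix ι ι α :=
  fun i j => (Icc 1 (Fintype.card ι)).inf fun m => minWalkWeight B m i j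

lemma kleenePlus_le_minWalkWeight {B : Matrix ι ι α}
    (hB : ∀ m f, 0 < m → f m = f 0 → 0 ≤ walkWeight B f m) {m : ℕ} (hm : 0 < m) (i j : ι) :
    kleenePlus B i j ≤ minWalkWeight B m i j := by
  by_cases htop : minWalkWeight B m i j = ⊤
  · exact htop ▸ le_top
  obtain ⟨f, hf0, hfm, hf⟩ := exists_walkWeight_eq_minWalkWeight B m htop
  obtain ⟨m', g, hm', hm'n, hg0, hgm, hg⟩ := exists_short_walkWeight_le hB (f := f) hm
  calc kleenePlus B i j ≤ minWalkWeight B m' i j := inf_le (mem_Icc.mpr ⟨hm', hm'n⟩)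
    _ ≤ walkWeight B g m' := by
      simpa only [hg0, hgm, hf0, hfm] using minWalkWeight_le_walkWeight B m' g
    _ ≤ walkWeight B f m := hg
    _ = minWalkWeight B m i j := hf

theorem inf_add_kleenePlus {B : Matrix ι ι α}
    (hB : ∀ m f, 0 < m → f m = f 0 → 0 ≤ walkWeight B f m) {j : ι} (hj : kleenePlus B j j ≤ 0)
    (i : ι) : univ.inf (fun k => B i k + kleenePlus B k j) = kleenePlus B i j := by
  have hle : ∀ m k, kleenePlus B k j ≤ minWalkWeight B m k j := by
    rintro (_ | m) k
    · by_cases hk : k = j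
      · simpa [minWalkWeight, hk] using hj
      · simp [minWalkWeight, hk]
    · exact kleenePlus_le_minWalkWeight hB m.succ_pos k j
  apply le_antisymm
  · refine Finset.le_inf fun m hm => ?_
    obtain ⟨m, rfl⟩ : ∃ m', m = m' + 1 := ⟨m - 1, by have := (mem_Icc.mp hm).1; omega⟩
    exact inf_mono_fun fun k _ => add_le_add_right (hle m k) _
  · refine Finset.le_inf fun k _ => ?_
    calc kleenePlus B i j
        ≤ (Icc 1 (Fintype.card ι)).inf (fun m => B i k + minWalkWeight B m k j) :=
          Finset.le_inf fun m _ => (hle (m + 1) i).trans (inf_le (mem_univ k))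
      _ = B i k + kleenePlus B k j := (add_finset_inf _ _ _).symm

end Powers

end MinPlus

open MinPlus

lemma walkWeight_add_neg_nonneg_of_circuit {n : ℕ} {A : Matrix (Fin n) (Fin n) (WithTop ℝ)}
    {lam : ℝ} (hlam : lam ∈ lowerBounds {w : ℝ | IsCircuitAvg A w}) {m : ℕ} {f : ℕ → Fin n}
    (hm : 0 < m) (hf : f m = f 0) (hinj : Set.InjOn f (Set.Iio m)) :
    0 ≤ walkWeight (fun i j => A i j + ((-lam : ℝ) : WithTop ℝ)) f m := by
  rw [walkWeight_add_const, ← WithTop.coe_nsmul, nsmul_eq_mul]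
  cases hw : walkWeight A f m with
  | top => simp
  | coe r =>
    have hm' : (0 : ℝ) < m := Nat.cast_pos.mpr hm
    have hcirc : IsCircuitAvg A (r / m) :=
      ⟨m, f, hm, hf, fun _ _ hk hl h => hinj hk hl h,
        by rw [← walkWeight, hw, mul_div_cancel₀ _ hm'.ne']⟩
    have hle : m * lam ≤ r := (le_div_iff₀' hm').mp (hlam hcirc)
    exact_mod_cast (by linarith : (0 : ℝ) ≤ r + m * -lam)

theorem minplus_min_circuit_avg_is_eigenvalue {n : ℕ}
    (A : Matrix (Fin n) (Fin n) (WithTop ℝ)) (lam : ℝ)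
    (hmin : IsLeast {w : ℝ | IsCircuitAvg A w} lam) :
    ∃ x : Fin n → WithTop ℝ, (∃ i, x i ≠ ⊤) ∧
      ∀ i, Finset.univ.inf (fun j => A i j + x j) = (lam : WithTop ℝ) + x i := by
  obtain ⟨s, f, hs, hcl, -, hsum⟩ := hmin.1
  set B : Matrix (Fin n) (Fin n) (WithTop ℝ) := fun i j => A i j + ((-lam : ℝ) : WithTop ℝ)
  have hB : ∀ m g, 0 < m → g m = g 0 → 0 ≤ walkWeight B g m := fun _ _ =>
    walkWeight_nonneg_of_closed fun _ _ => walkWeight_add_neg_nonneg_of_circuit hmin.2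
  have hcrit : walkWeight B f s = 0 := by
    rw [walkWeight_add_const, walkWeight, hsum, ← WithTop.coe_nsmul, ← WithTop.coe_add]
    simp [nsmul_eq_mul]
  have hdiag : kleenePlus B (f 0) (f 0) ≤ 0 :=
    calc kleenePlus B (f 0) (f 0) ≤ minWalkWeight B s (f 0) (f s) :=
          hcl ▸ kleenePlus_le_minWalkWeight hB hs _ _
      _ ≤ walkWeight B f s := minWalkWeight_le_walkWeight B s f
      _ = 0 := hcrit
  refine ⟨fun i => kleenePlus B i (f 0), ⟨f 0, ne_top_of_le_ne_top WithTop.zero_ne_top hdiag⟩,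
    fun i => ?_⟩
  have hA : ∀ j, A i j = lam + B i j := fun j => by
    rw [add_left_comm, ← WithTop.coe_add, add_neg_cancel, WithTop.coe_zero, add_zero]
  simp only [hA, add_assoc]
  rw [← add_finset_inf, inf_add_kleenePlus hB hdiag]
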